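/- arXiv:1704.01929 — 4 statements merged into one kernel-verified Lean document; each statement's English description precedes it below -/
import Mathlib

section
/- Let E = {1, 2, ..., m} be a finite universe and let M ⊆ 2^E be any nonempty family of subsets of E. Suppose a weight function w : E → {1, 2, ..., 2m} is chosen by selecting each value w(e), e ∈ E, independently and uniformly at random. Then with probability at least 1/2 there is a unique set M₀ ∈ M minimizing the weight w(M₀) = Σ_{e ∈ M₀} w(e). -/
/-!
Call `e` singular for `w` if some minimum-weight set contains `e` and another one avoids it.
If the minimizer is not unique, two distinct minimizers differ in some element, which is then
singular. Whether `e` is singular pins down `w e` once the other weights are fixed: raising the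
weight of `e` above a value at which `e` is singular makes every set containing `e` heavier than a
minimizer avoiding `e`. So for each `e` at most one of the `2m` values of `w e` makes `e` singular,
and a union bound over the `m` elements gives probability at most `m / 2m = 1/2` of failure.
-/

open Finset Function
open scoped Classical

section Weights

variable {α R : Type*} [AddCommMonoid R] {ℳ : Finset (Finset α)} {w w' : α → R} {e : α}

theorem sum_eq_sum_of_notMem (hoff : ∀ x ≠ e, w x = w' x) {M : Finset α} (he : e ∉ M) :
    ∑ x ∈ M, w x = ∑ x ∈ M, w' x :=
  sum_congr rfl fun x hx => hoff x (ne_of_mem_of_not_mem hx he)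

variable [LinearOrder R]

def IsMinWeight (ℳ : Finset (Finset α)) (w : α → R) (M : Finset α) : Prop :=
  M ∈ ℳ ∧ ∀ M' ∈ ℳ, ∑ x ∈ M, w x ≤ ∑ x ∈ M', w x

def HasUniqueMinWeight (ℳ : Finset (Finset α)) (w : α → R) : Prop :=
  ∃ M₀ ∈ ℳ, ∀ M ∈ ℳ, M ≠ M₀ → ∑ x ∈ M₀, w x < ∑ x ∈ M, w x

def IsSingular (ℳ : Finset (Finset α)) (w : α → R) (e : α) : Prop :=
  (∃ M, IsMinWeight ℳ w M ∧ e ∈ M) ∧ ∃ M, IsMinWeight ℳ w M ∧ e ∉ M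

theorem exists_isSingular_of_not_hasUniqueMinWeight (hℳ : ℳ.Nonempty)
    (h : ¬ HasUniqueMinWeight ℳ w) : ∃ e, IsSingular ℳ w e := by
  obtain ⟨M₀, hM₀, hmin₀⟩ := exists_min_image ℳ (fun M => ∑ x ∈ M, w x) hℳ
  unfold HasUniqueMinWeight at h
  push Not at h
  obtain ⟨M, hM, hne, hle⟩ := h M₀ hM₀
  have hmin : IsMinWeight ℳ w M := ⟨hM, fun M' hM' => hle.trans (hmin₀ M' hM')⟩
  obtain ⟨e, he⟩ : ∃ e, ¬(e ∈ M ↔ e ∈ M₀) := by simpa [Finset.ext_iff] using hne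
  by_cases heM : e ∈ M
  · exact ⟨e, ⟨M, hmin, heM⟩, M₀, ⟨hM₀, hmin₀⟩, by tauto⟩
  · exact ⟨e, ⟨M₀, ⟨hM₀, hmin₀⟩, by tauto⟩, M, hmin, heM⟩

variable [IsOrderedCancelAddMonoid R]

theorem sum_lt_sum_of_mem (hoff : ∀ x ≠ e, w x = w' x) (hlt : w e < w' e) {M : Finset α}
    (he : e ∈ M) : ∑ x ∈ M, w x < ∑ x ∈ M, w' x := by
  refine sum_lt_sum (fun x _ => ?_) ⟨e, he, hlt⟩
  obtain rfl | hx := eq_or_ne x e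
  exacts [hlt.le, (hoff x hx).le]

theorem IsMinWeight.notMem_of_lt {M₁ M₂ : Finset α} (hM₂ : IsMinWeight ℳ w M₂) (he₂ : e ∉ M₂)
    (hoff : ∀ x ≠ e, w x = w' x) (hlt : w e < w' e) (hM₁ : IsMinWeight ℳ w' M₁) : e ∉ M₁ := by
  intro he₁
  have := calc
    ∑ x ∈ M₁, w' x ≤ ∑ x ∈ M₂, w' x := hM₁.2 M₂ hM₂.1
    _ = ∑ x ∈ M₂, w x := (sum_eq_sum_of_notMem hoff he₂).symm
    _ ≤ ∑ x ∈ M₁, w x := hM₂.2 M₁ hM₁.1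
    _ < ∑ x ∈ M₁, w' x := sum_lt_sum_of_mem hoff hlt he₁
  exact lt_irrefl _ this

theorem IsSingular.apply_eq (h : IsSingular ℳ w e) (h' : IsSingular ℳ w' e)
    (hoff : ∀ x ≠ e, w x = w' x) : w e = w' e := by
  obtain ⟨⟨M₁, hM₁, he₁⟩, M₂, hM₂, he₂⟩ := h
  obtain ⟨⟨M₁', hM₁', he₁'⟩, M₂', hM₂', he₂'⟩ := h'
  rcases lt_trichotomy (w e) (w' e) with hlt | heq | hgt
  · exact absurd he₁' (hM₂.notMem_of_lt he₂ hoff hlt hM₁')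
  · exact heq
  · exact absurd he₁ (hM₂'.notMem_of_lt he₂' (fun x hx => (hoff x hx).symm) hgt hM₁)

end Weights

section Counting

variable {α ι : Type*} [Fintype α] [DecidableEq α] [Fintype ι]

theorem card_filter_mul_card_le (e : α) (P : (α → ι) → Prop) [DecidablePred P]
    (hP : ∀ w w', P w → P w' → (∀ x ≠ e, w x = w' x) → w e = w' e) :
    #{w | P w} * Fintype.card ι ≤ Fintype.card (α → ι) := by
  rw [← card_univ (α := ι), ← card_product, ← card_univ (α := α → ι)]
  refine card_le_card_of_injOn (fun p => update p.1 e p.2) (fun _ _ => mem_univ _) ?_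
  rintro ⟨w, i⟩ hw ⟨w', i'⟩ hw' hupd
  simp only [coe_product, coe_filter, coe_univ, Set.mem_prod, Set.mem_univ, mem_univ, true_and,
    Set.mem_ofPred_eq] at hw hw' hupd
  have hoff : ∀ x ≠ e, w x = w' x := fun x hx => by
    simpa [update_of_ne hx] using congrFun hupd x
  have hi : i = i' := by simpa using congrFun hupd e
  have he : w e = w' e := hP w w' hw.1 hw'.1 hoff
  refine Prod.ext (funext fun x => ?_) hi
  obtain rfl | hx := eq_or_ne x e
  exacts [he, hoff x hx]

variable {R : Type*} [AddCommMonoid R] [LinearOrder R] [IsOrderedCancelAddMonoid R]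

theorem card_not_hasUniqueMinWeight_mul_le {ℳ : Finset (Finset α)} (hℳ : ℳ.Nonempty)
    {c : ι → R} (hc : Injective c) :
    #{w : α → ι | ¬ HasUniqueMinWeight ℳ (c ∘ w)} * Fintype.card ι ≤
      Fintype.card α * Fintype.card (α → ι) := by
  have hsub : ({w : α → ι | ¬ HasUniqueMinWeight ℳ (c ∘ w)} : Finset (α → ι)) ⊆
      univ.biUnion fun e => {w : α → ι | IsSingular ℳ (c ∘ w) e} := fun w hw => by
    obtain ⟨e, he⟩ := exists_isSingular_of_not_hasUniqueMinWeight hℳ (mem_filter.1 hw).2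
    exact mem_biUnion.2 ⟨e, mem_univ e, mem_filter.2 ⟨mem_univ w, he⟩⟩
  calc #{w : α → ι | ¬ HasUniqueMinWeight ℳ (c ∘ w)} * Fintype.card ι
      ≤ (∑ e, #{w : α → ι | IsSingular ℳ (c ∘ w) e}) * Fintype.card ι := by
        gcongr
        exact (card_le_card hsub).trans card_biUnion_le
    _ = ∑ e, #{w : α → ι | IsSingular ℳ (c ∘ w) e} * Fintype.card ι := sum_mul ..
    _ ≤ ∑ _e : α, Fintype.card (α → ι) := sum_le_sum fun e _ =>
        card_filter_mul_card_le e _ fun _ _ h h' hoff =>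
          hc (h.apply_eq h' fun x hx => congrArg c (hoff x hx))
    _ = Fintype.card α * Fintype.card (α → ι) := by simp

end Counting

/-- **Isolation Lemma** (Mulmuley–Vazirani–Vazirani).
Let `E = {1, …, m}` and let `ℳ` be a nonempty family of subsets of `E`.  If a weight
function `w : E → {1, …, 2m}` is chosen uniformly at random (modelled here by counting:
the weight of `e` is `(w e : ℕ) + 1` for `w : Fin m → Fin (2*m)`), then with probability
at least `1/2` there is a unique set `M₀ ∈ ℳ` minimizing `w(M₀) = Σ_{e ∈ M₀} w(e)`,
i.e. a set `M₀ ∈ ℳ` with `w(M₀) < w(M)` for every `M ∈ ℳ` with `M ≠ M₀`. -/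
theorem isolation_lemma (m : ℕ) (ℳ : Finset (Finset (Fin m))) (hℳ : ℳ.Nonempty) :
    Fintype.card (Fin m → Fin (2 * m)) ≤
      2 * (Finset.univ.filter (fun w : Fin m → Fin (2 * m) =>
            ∃ M₀ ∈ ℳ, ∀ M ∈ ℳ, M ≠ M₀ →
              (∑ e ∈ M₀, ((w e : ℕ) + 1)) < ∑ e ∈ M, ((w e : ℕ) + 1))).card := by
  let c : Fin (2 * m) → ℕ := fun i => i + 1
  have hc : Injective c := fun i j h => Fin.ext (Nat.succ_injective h)
  have hsplit := card_filter_add_card_filter_not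
    (s := univ) fun w : Fin m → Fin (2 * m) => HasUniqueMinWeight ℳ (c ∘ w)
  have hbad : 2 * #{w : Fin m → Fin (2 * m) | ¬ HasUniqueMinWeight ℳ (c ∘ w)} ≤
      Fintype.card (Fin m → Fin (2 * m)) := by
    rcases m.eq_zero_or_pos with rfl | hm
    · have hgood (w : Fin 0 → Fin (2 * 0)) : HasUniqueMinWeight ℳ (c ∘ w) := by
        by_contra hw
        exact (exists_isSingular_of_not_hasUniqueMinWeight hℳ hw).elim fun e _ => e.elim0
      simp [hgood]
    · have := card_not_hasUniqueMinWeight_mul_le hℳ hc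
      simp only [Fintype.card_fin] at this
      nlinarith
  rw [card_univ] at hsplit
  convert (by omega : Fintype.card (Fin m → Fin (2 * m)) ≤
    2 * #{w : Fin m → Fin (2 * m) | HasUniqueMinWeight ℳ (c ∘ w)}) using 4
  rfl
end

section
/- For any number s ≥ 1 with n³s ≥ 7 and any vectors y_1, ..., y_s ∈ ℤ^E \ {0} satisfying ‖y_i‖₁ ≤ 4n² for each i, there exists a weight function w ∈ W(n³s) such that ⟨y_i, w⟩ ≠ 0 for every i = 1, ..., s. -/
/- Formalization framework for "The Matching Problem in General Graphs is in Quasi-NC"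
(Svensson–Tarnawski).  The graph has vertex set `Fin n`; vectors indexed by edges are
modelled as functions `Sym2 (Fin n) → ℝ` (resp. `ℤ`) supported on the edge set. -/

open scoped BigOperators
open scoped Classical

noncomputable section

namespace PMQuasiNC

/-- The dot product `⟨w, x⟩` of two real vectors indexed by (potential) edges. -/
def dotR {n : ℕ} (w x : Sym2 (Fin n) → ℝ) : ℝ := ∑ e : Sym2 (Fin n), w e * x e

/-- The dot product of two integer vectors indexed by (potential) edges. -/
def dotZ {n : ℕ} (y w : Sym2 (Fin n) → ℤ) : ℤ := ∑ e : Sym2 (Fin n), y e * w e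

/-- The ℓ¹ norm `‖y‖₁` of an integer vector. -/
def l1norm {n : ℕ} (y : Sym2 (Fin n) → ℤ) : ℤ := ∑ e : Sym2 (Fin n), |y e|

/-- The support of an integer vector. -/
def suppZ {n : ℕ} (y : Sym2 (Fin n) → ℤ) : Set (Sym2 (Fin n)) := {e | y e ≠ 0}

/-- `δ(S)`: the set of edges of `G` with exactly one endpoint in `S`. -/
def cut {n : ℕ} (G : SimpleGraph (Fin n)) (S : Finset (Fin n)) : Set (Sym2 (Fin n)) :=
  {e | e ∈ G.edgeSet ∧ ∃ u v, e = s(u, v) ∧ u ∈ S ∧ v ∉ S}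

/-- `E(S)`: the set of edges of `G` with both endpoints in `S`. -/
def insideEdges {n : ℕ} (G : SimpleGraph (Fin n)) (S : Finset (Fin n)) :
    Set (Sym2 (Fin n)) :=
  {e | e ∈ G.edgeSet ∧ ∀ v ∈ e, v ∈ S}

/-- The indicator vector `1_{δ(S)}` of the cut `δ(S)`. -/
def cutInd {n : ℕ} (G : SimpleGraph (Fin n)) (S : Finset (Fin n)) : Sym2 (Fin n) → ℝ :=
  fun e => if e ∈ cut G S then 1 else 0

/-- `⟨y, 1_{δ(S)}⟩ = Σ_{e ∈ δ(S)} y_e` for an integer vector `y`. -/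
def cutSumZ {n : ℕ} (G : SimpleGraph (Fin n)) (S : Finset (Fin n))
    (y : Sym2 (Fin n) → ℤ) : ℤ :=
  ∑ e : Sym2 (Fin n), if e ∈ cut G S then y e else 0

/-- A perfect matching of `G`: a set of edges of `G` such that every vertex lies in
exactly one of them. -/
def IsPerfectMatching {n : ℕ} (G : SimpleGraph (Fin n)) (M : Set (Sym2 (Fin n))) : Prop :=
  M ⊆ G.edgeSet ∧ ∀ v : Fin n, ∃! e, e ∈ M ∧ v ∈ e

/-- The indicator vector of a set of edges. -/
def indic {n : ℕ} (M : Set (Sym2 (Fin n))) : Sym2 (Fin n) → ℝ :=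
  fun e => if e ∈ M then 1 else 0

/-- The perfect matching polytope: the convex hull of the indicator vectors of all
perfect matchings of `G`. -/
def PMpoly {n : ℕ} (G : SimpleGraph (Fin n)) : Set (Sym2 (Fin n) → ℝ) :=
  convexHull ℝ {x | ∃ M, IsPerfectMatching G M ∧ x = indic M}

/-- `F[w] = argmin {⟨w,x⟩ : x ∈ F}` for a real weight function `w`. -/
def faceMinR {n : ℕ} (F : Set (Sym2 (Fin n) → ℝ)) (w : Sym2 (Fin n) → ℝ) :
    Set (Sym2 (Fin n) → ℝ) :=
  {x ∈ F | ∀ y ∈ F, dotR w x ≤ dotR w y}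

/-- `F[w] = argmin {⟨w,x⟩ : x ∈ F}` for an integer weight function `w`. -/
def faceMin {n : ℕ} (F : Set (Sym2 (Fin n) → ℝ)) (w : Sym2 (Fin n) → ℤ) :
    Set (Sym2 (Fin n) → ℝ) :=
  faceMinR F (fun e => (w e : ℝ))

/-- A face of the perfect matching polytope: a nonempty subset of the form
`argmin {⟨w,x⟩ : x ∈ PM}` for some linear functional `w` (this includes `PM` itself,
via `w = 0`). -/
def IsFace {n : ℕ} (G : SimpleGraph (Fin n)) (F : Set (Sym2 (Fin n) → ℝ)) : Prop :=
  F.Nonempty ∧ ∃ w : Sym2 (Fin n) → ℝ, F = faceMinR (PMpoly G) w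

/-- `supp(F) = {e : ∃ x ∈ F, x_e > 0}`. -/
def faceSupp {n : ℕ} (F : Set (Sym2 (Fin n) → ℝ)) : Set (Sym2 (Fin n)) :=
  {e | ∃ x ∈ F, 0 < x e}

/-- `tight(F)`: the vertex sets `S` of odd cardinality with `x(δ(S)) = 1` for all
`x ∈ F`. -/
def tightSets {n : ℕ} (G : SimpleGraph (Fin n)) (F : Set (Sym2 (Fin n) → ℝ)) :
    Set (Finset (Fin n)) :=
  {S | Odd S.card ∧ ∀ x ∈ F, dotR (cutInd G S) x = 1}

/-- An integer vector `y` respects a face `F` if `supp(y) ⊆ supp(F)` and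
`⟨y, 1_{δ(S)}⟩ = 0` for every `S ∈ tight(F)`. -/
def RespectsFace {n : ℕ} (G : SimpleGraph (Fin n)) (y : Sym2 (Fin n) → ℤ)
    (F : Set (Sym2 (Fin n) → ℝ)) : Prop :=
  suppZ y ⊆ faceSupp F ∧ ∀ S ∈ tightSets G F, cutSumZ G S y = 0

/-- `S` is `F`-contractible: for every `e ∈ δ(S)` there are no two perfect matchings
in `F` that both contain `e` and differ on `E(S)`. -/
def Contractible {n : ℕ} (G : SimpleGraph (Fin n)) (F : Set (Sym2 (Fin n) → ℝ))
    (S : Finset (Fin n)) : Prop :=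
  ∀ e ∈ cut G S, ∀ M₁ M₂ : Set (Sym2 (Fin n)),
    IsPerfectMatching G M₁ → IsPerfectMatching G M₂ →
    indic M₁ ∈ F → indic M₂ ∈ F → e ∈ M₁ → e ∈ M₂ →
    M₁ ∩ insideEdges G S = M₂ ∩ insideEdges G S

/-- Two vertex sets cross if `S∩T`, `S\T`, `T\S` are all nonempty. -/
def Crossing {n : ℕ} (S T : Finset (Fin n)) : Prop :=
  (S ∩ T).Nonempty ∧ (S \ T).Nonempty ∧ (T \ S).Nonempty

/-- A family of vertex sets is laminar if no two of its members cross. -/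
def Laminar {n : ℕ} (L : Set (Finset (Fin n))) : Prop :=
  ∀ S ∈ L, ∀ T ∈ L, ¬ Crossing S T

/-- `L` is a maximal laminar subfamily of `S`: `L ⊆ S` is laminar and no set of
`S \ L` can be added to `L` while keeping it laminar. -/
def MaxLaminarIn {n : ℕ} (L S : Set (Finset (Fin n))) : Prop :=
  L ⊆ S ∧ Laminar L ∧ ∀ T ∈ S, T ∉ L → ¬ Laminar (insert T L)

/-- The vertices of the `(F, L, λ)`-contraction: the maximal sets of `L` of
cardinality at most `lam`. -/
def contrVerts {n : ℕ} (L : Set (Finset (Fin n))) (lam : ℕ) : Set (Finset (Fin n)) :=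
  {S | S ∈ L ∧ S.card ≤ lam ∧ ∀ T ∈ L, T.card ≤ lam → S ⊆ T → S = T}

/-- The edges of the `(F, L, λ)`-contraction of `G`, identified with their preimages
in `G`: edges of `supp(F)` that do not cross the boundary `δ(T)` of any `T ∈ L` with
`|T| > λ` and do not lie inside a contracted set. -/
def contrEdges {n : ℕ} (G : SimpleGraph (Fin n)) (F : Set (Sym2 (Fin n) → ℝ))
    (L : Set (Finset (Fin n))) (lam : ℕ) : Set (Sym2 (Fin n)) :=
  {e | e ∈ faceSupp F ∧ (∀ T ∈ L, lam < T.card → e ∉ cut G T) ∧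
       ∀ S ∈ contrVerts L lam, ¬ (∀ v ∈ e, v ∈ S)}

/-- Two vertices of `G` map to the same vertex of the `(F, L, λ)`-contraction. -/
def sameClass {n : ℕ} (L : Set (Finset (Fin n))) (lam : ℕ) (u v : Fin n) : Prop :=
  u = v ∨ ∃ S ∈ contrVerts L lam, u ∈ S ∧ v ∈ S

/-- The node-weight of (the contraction vertex of) a vertex `v`: the cardinality of the
contracted set containing `v` (and `1` if `v` is not contained in any contracted set). -/
def classWeight {n : ℕ} (L : Set (Finset (Fin n))) (lam : ℕ) (v : Fin n) : ℕ :=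
  max 1 (sSup {m : ℕ | ∃ S ∈ contrVerts L lam, v ∈ S ∧ S.card = m})

/-- The alternating indicator vector `χ̃_C = Σ_i (-1)^i 1_{e_i}` of a closed walk of
length `k` given by its oriented edges `C 0, …, C (k-1)` (edges of the contraction are
identified with their preimages in `G`). -/
def altInd {n : ℕ} (k : ℕ) (C : ℕ → Fin n × Fin n) : Sym2 (Fin n) → ℤ :=
  fun e => ∑ i ∈ Finset.range k, if s((C i).1, (C i).2) = e then (-1 : ℤ) ^ i else 0

/-- `C 0, …, C (k-1)` is an alternating circuit in the `(F, L, lam)`-contraction of `G`: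
a nonempty closed walk of even length whose alternating indicator vector is nonzero. -/
def IsAltCircuit {n : ℕ} (G : SimpleGraph (Fin n)) (F : Set (Sym2 (Fin n) → ℝ))
    (L : Set (Finset (Fin n))) (lam : ℕ) (k : ℕ) (C : ℕ → Fin n × Fin n) : Prop :=
  0 < k ∧ Even k ∧
  (∀ i < k, s((C i).1, (C i).2) ∈ contrEdges G F L lam) ∧
  (∀ i < k, sameClass L lam (C i).2 (C ((i + 1) % k)).1) ∧
  altInd k C ≠ 0

/-- The node-weight of a closed walk in the contraction: the sum of the node-weights of
the visited vertices, with multiplicity. -/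
def circuitWeight {n : ℕ} (L : Set (Finset (Fin n))) (lam : ℕ) (k : ℕ)
    (C : ℕ → Fin n × Fin n) : ℕ :=
  ∑ i ∈ Finset.range k, classWeight L lam (C i).1

/-- The `(F, L, lam)`-contraction of `G` has no alternating circuit of node-weight at
most `bound`. -/
def NoAltCircuit {n : ℕ} (G : SimpleGraph (Fin n)) (F : Set (Sym2 (Fin n) → ℝ))
    (L : Set (Finset (Fin n))) (lam bound : ℕ) : Prop :=
  ∀ k, ∀ C : ℕ → Fin n × Fin n,
    IsAltCircuit G F L lam k C → circuitWeight L lam k C ≤ bound → False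

/-- `S` is a union of vertex sets of the `(F, L, lam)`-contraction. -/
def IsUnionOfVerts {n : ℕ} (L : Set (Finset (Fin n))) (lam : ℕ)
    (S : Finset (Fin n)) : Prop :=
  ∃ A : Set (Finset (Fin n)), A ⊆ contrVerts L lam ∧
    (S : Set (Fin n)) = ⋃ T ∈ A, (T : Set (Fin n))

/-- A vector `z` on the edges of the `(F, L, lam)`-contraction `H` (identified with a
vector in `ℤ^E` via preimages) respects a subface `F'` if `supp(z) ⊆ supp(F')` and
`⟨z, 1_{δ(S)}⟩ = 0` for every `S ∈ tight(F')` that is a union of vertex sets of `H`. -/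
def RespectsContr {n : ℕ} (G : SimpleGraph (Fin n)) (L : Set (Finset (Fin n)))
    (lam : ℕ) (z : Sym2 (Fin n) → ℤ) (F' : Set (Sym2 (Fin n) → ℝ)) : Prop :=
  suppZ z ⊆ faceSupp F' ∧
  ∀ S ∈ tightSets G F', IsUnionOfVerts L lam S → cutSumZ G S z = 0

/-- The face-laminar pair `(F, L)` is `lam`-good: `L` is a maximal laminar subset of
`tight(F)`, every `S ∈ L` with `|S| ≤ lam` is `F`-contractible, and the
`(F, L, lam)`-contraction of `G` has no alternating circuit of node-weight at most
`lam`. -/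
def LambdaGood {n : ℕ} (G : SimpleGraph (Fin n)) (F : Set (Sym2 (Fin n) → ℝ))
    (L : Set (Finset (Fin n))) (lam : ℕ) : Prop :=
  MaxLaminarIn L (tightSets G F) ∧
  (∀ S ∈ L, S.card ≤ lam → Contractible G F S) ∧
  NoAltCircuit G F L lam lam

/-- The family of weight functions `W(t)`, relative to a fixed enumeration `idx` of the
edges: `w_k(e_j) = (4n²+1)^j mod k` for `k = 2, …, t`. -/
def Wfam (n : ℕ) (idx : Sym2 (Fin n) → ℕ) (t : ℕ) : Set (Sym2 (Fin n) → ℤ) :=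
  {w | ∃ k : ℕ, 2 ≤ k ∧ k ≤ t ∧ w = fun e => ((4 * (n : ℤ) ^ 2 + 1) ^ (idx e)) % (k : ℤ)}

/-- `W = W(n^20)`. -/
def Wbig (n : ℕ) (idx : Sym2 (Fin n) → ℕ) : Set (Sym2 (Fin n) → ℤ) :=
  Wfam n idx (n ^ 20)

/-- Concatenation of weight functions: `w ∘ w' = n²¹·w + w'`. -/
def concatW (n : ℕ) (w w' : Sym2 (Fin n) → ℤ) : Sym2 (Fin n) → ℤ :=
  fun e => (n : ℤ) ^ 21 * w e + w' e

/-- `W^k`: left-associated `k`-fold concatenations `w₁ ∘ ⋯ ∘ w_k` with each `wᵢ ∈ W`. -/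
def Wpow (n : ℕ) (idx : Sym2 (Fin n) → ℕ) : ℕ → Set (Sym2 (Fin n) → ℤ)
  | 0 => {fun _ => 0}
  | (k + 1) => {u | ∃ w ∈ Wpow n idx k, ∃ w' ∈ Wbig n idx, u = concatW n w w'}

/-- `idx` enumerates the edges of `G` as `e_1, …, e_{|E|}`. -/
def IsEnum {n : ℕ} (G : SimpleGraph (Fin n)) (idx : Sym2 (Fin n) → ℕ) : Prop :=
  Set.BijOn idx G.edgeSet (Set.Icc 1 G.edgeSet.ncard)
/-! The weight `w_k` is `e ↦ B ^ idx e mod k` with `B = 4n² + 1`, so `⟨y, w_k⟩ ≡ Y [ZMOD k]` for the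
integer `Y = Σ_e y_e B^{idx e}`. Since `‖y‖₁ < B` and `idx` is injective on the support of `y`,
`Y` is a base-`B` expansion with small digits: it is nonzero (its leading digit dominates) and
`|Y| < B^{n²+1}`. If every `w_k` killed some `y_i`, every `k ≤ t = n³s` would divide the nonzero
product `P` of the `|Y_i|`, hence so would `lcm(1, …, t) ≥ 2^t / (t + 1)`, whereas
`(t + 1) P < 2^t`. -/

section BaseExpansion

variable {ι : Type*}

theorem abs_sum_mul_pow_lt {B : ℤ} {idx : ι → ℕ} (hB : 0 < B) {T : Finset ι} {f : ι → ℤ} {d : ℕ}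
    (hidx : ∀ e ∈ T, idx e < d) (hf : ∑ e ∈ T, |f e| < B) :
    |∑ e ∈ T, f e * B ^ idx e| < B ^ d := by
  have hterm : ∀ e ∈ T, B * |f e * B ^ idx e| ≤ |f e| * B ^ d := fun e he => by
    rw [abs_mul, abs_pow, abs_of_pos hB, mul_left_comm, ← pow_succ']
    exact mul_le_mul_of_nonneg_left (pow_le_pow_right₀ (by omega) (hidx e he)) (abs_nonneg _)
  refine lt_of_mul_lt_mul_left ?_ hB.le
  calc B * |∑ e ∈ T, f e * B ^ idx e|
      ≤ ∑ e ∈ T, B * |f e * B ^ idx e| := by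
        rw [← Finset.mul_sum]; exact mul_le_mul_of_nonneg_left (Finset.abs_sum_le_sum_abs _ _) hB.le
    _ ≤ (∑ e ∈ T, |f e|) * B ^ d := by rw [Finset.sum_mul]; exact Finset.sum_le_sum hterm
    _ < B * B ^ d := mul_lt_mul_of_pos_right hf (pow_pos hB d)

variable [Fintype ι]

def powSum (B : ℤ) (idx : ι → ℕ) (y : ι → ℤ) : ℤ := ∑ e, y e * B ^ idx e

variable {B : ℤ} {idx : ι → ℕ}

theorem abs_powSum_lt (hB : 0 < B) {y : ι → ℤ} {d : ℕ} (hidx : ∀ e, y e ≠ 0 → idx e < d)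
    (hy : ∑ e, |y e| < B) : |powSum B idx y| < B ^ d := by
  have key := abs_sum_mul_pow_lt hB (T := {e | y e ≠ 0}) (by simpa using hidx)
    ((Finset.sum_le_sum_of_subset_of_nonneg (Finset.subset_univ _)
      fun e _ _ => abs_nonneg (y e)).trans_lt hy)
  rwa [Finset.sum_filter_of_ne fun e _ h => left_ne_zero_of_mul h] at key

theorem powSum_ne_zero (hB : 0 < B) {y : ι → ℤ} (hy0 : y ≠ 0)
    (hinj : Set.InjOn idx {e | y e ≠ 0}) (hy : ∑ e, |y e| < B) : powSum B idx y ≠ 0 := by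
  set T : Finset ι := {e | y e ≠ 0}
  have hT : T.Nonempty := by
    obtain ⟨e, he⟩ := Function.ne_iff.mp hy0
    exact ⟨e, by simpa [T] using he⟩
  obtain ⟨e₀, he₀, hmax⟩ := T.exists_max_image idx hT
  have hsplit : powSum B idx y = y e₀ * B ^ idx e₀ + ∑ e ∈ T.erase e₀, y e * B ^ idx e := by
    rw [Finset.add_sum_erase T (fun e => y e * B ^ idx e) he₀, powSum,
      ← Finset.sum_filter_of_ne fun e _ h => left_ne_zero_of_mul h]
  have hrest : |∑ e ∈ T.erase e₀, y e * B ^ idx e| < B ^ idx e₀ := by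
    refine abs_sum_mul_pow_lt hB (fun e he => ?_) ?_
    · have heT := Finset.mem_of_mem_erase he
      refine (hmax e heT).lt_of_ne fun h => Finset.ne_of_mem_erase he ?_
      exact hinj (by simpa [T] using heT) (by simpa [T] using he₀) h
    · exact (Finset.sum_le_sum_of_subset_of_nonneg (Finset.subset_univ _)
        fun e _ _ => abs_nonneg (y e)).trans_lt hy
  have hlead : B ^ idx e₀ ≤ |y e₀ * B ^ idx e₀| := by
    rw [abs_mul, abs_pow, abs_of_pos hB]
    exact le_mul_of_one_le_left (pow_nonneg hB.le _)
      (Int.one_le_abs (by simpa [T] using he₀))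
  intro h
  rw [hsplit, add_eq_zero_iff_eq_neg] at h
  rw [h, abs_neg] at hlead
  exact hlead.not_gt hrest

theorem dvd_powSum_of_sum_mul_emod_eq_zero {k : ℤ} {y : ι → ℤ}
    (h : ∑ e, y e * (B ^ idx e % k) = 0) : k ∣ powSum B idx y := by
  rw [← Int.modEq_zero_iff_dvd, ← h]
  exact Int.ModEq.sum fun e _ => ((Int.mod_modEq _ k).mul_left (y e)).symm

end BaseExpansion

theorem exists_not_dvd_of_succ_mul_lt_two_pow {P t : ℕ} (hP : P ≠ 0) (h : (t + 1) * P < 2 ^ t) :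
    ∃ k, 2 ≤ k ∧ k ≤ t ∧ ¬ k ∣ P := by
  by_contra! hdvd
  have hlcm : Nat.lcmUpto t ∣ P := Finset.lcm_dvd fun k hk => by
    obtain ⟨hk1, hkt⟩ := Finset.mem_Icc.mp hk
    rcases hk1.eq_or_lt with rfl | hk2
    · exact one_dvd P
    · exact hdvd k hk2 hkt
  have := Chebyshev.two_pow_le_mul_lcmUpto t
  have := Nat.le_of_dvd (Nat.pos_of_ne_zero hP) hlcm
  nlinarith

theorem succ_mul_lt_two_pow {c X s P : ℕ} (hcX : (c + 1) * X ≤ 2 ^ c) (hP : P < X ^ s) :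
    (c * s + 1) * P < 2 ^ (c * s) :=
  calc (c * s + 1) * P < (c * s + 1) * X ^ s := Nat.mul_lt_mul_of_pos_left hP (Nat.succ_pos _)
    _ ≤ (c + 1) ^ s * X ^ s := by
      gcongr
      simpa [add_comm, mul_comm] using one_add_le_pow_of_two_add_nonneg (Nat.zero_le (2 + c)) s
    _ ≤ (2 ^ c) ^ s := by rw [← mul_pow]; exact Nat.pow_le_pow_left hcX s
    _ = 2 ^ (c * s) := (pow_mul 2 c s).symm

theorem eight_mul_le_two_pow {n : ℕ} (hn : 13 ≤ n) : 8 * (4 * n ^ 2 + 1) ≤ 2 ^ n := by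
  induction n, hn using Nat.le_induction with
  | base => norm_num
  | succ n hn ih => rw [pow_succ 2 n]; nlinarith

theorem succ_cube_mul_pow_le_two_pow {n : ℕ} (hn : 13 ≤ n) :
    (n ^ 3 + 1) * (4 * n ^ 2 + 1) ^ (n ^ 2 + 1) ≤ 2 ^ n ^ 3 := by
  have hcube : (n ^ 3 + 1) * 2 ^ n ≤ 8 ^ (n ^ 2 + 1) := by
    have h1 : n ^ 3 + 1 ≤ 2 ^ (3 * n) := by
      rw [pow_mul']; exact Nat.pow_lt_pow_left Nat.lt_two_pow_self (by norm_num)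
    calc (n ^ 3 + 1) * 2 ^ n ≤ 2 ^ (3 * n) * 2 ^ n := Nat.mul_le_mul_right _ h1
      _ = 2 ^ (4 * n) := by rw [← pow_add]; ring_nf
      _ ≤ 2 ^ (3 * (n ^ 2 + 1)) := Nat.pow_le_pow_right (by norm_num) (by nlinarith)
      _ = 8 ^ (n ^ 2 + 1) := by rw [pow_mul]; norm_num
  refine Nat.le_of_mul_le_mul_right ?_ (pow_pos (by norm_num : 0 < 8) (n ^ 2 + 1))
  calc (n ^ 3 + 1) * (4 * n ^ 2 + 1) ^ (n ^ 2 + 1) * 8 ^ (n ^ 2 + 1)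
      = (n ^ 3 + 1) * (8 * (4 * n ^ 2 + 1)) ^ (n ^ 2 + 1) := by rw [mul_pow]; ring
    _ ≤ (n ^ 3 + 1) * (2 ^ n) ^ (n ^ 2 + 1) := by gcongr; exact eight_mul_le_two_pow hn
    _ = (n ^ 3 + 1) * 2 ^ n * 2 ^ n ^ 3 := by rw [← pow_mul, mul_add, ← pow_succ', pow_add]; ring
    _ ≤ 8 ^ (n ^ 2 + 1) * 2 ^ n ^ 3 := Nat.mul_le_mul_right _ hcube
    _ = 2 ^ n ^ 3 * 8 ^ (n ^ 2 + 1) := mul_comm _ _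

theorem ncard_edgeSet_le_choose_two {V : Type*} [Fintype V] (G : SimpleGraph V) :
    G.edgeSet.ncard ≤ (Fintype.card V).choose 2 := by
  rw [← G.coe_edgeFinset, Set.ncard_coe_finset]
  exact G.card_edgeFinset_le_card_choose_two

theorem IsEnum.apply_le_sq {n : ℕ} {G : SimpleGraph (Fin n)} {idx : Sym2 (Fin n) → ℕ}
    (henum : IsEnum G idx) {e : Sym2 (Fin n)} (he : e ∈ G.edgeSet) : idx e ≤ n ^ 2 := by
  have := (henum.mapsTo he).2.trans (ncard_edgeSet_le_choose_two G)
  rw [Fintype.card_fin] at this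
  exact this.trans (Nat.choose_le_pow n 2)

/-- **Lemma 2.3 (oblivious nonzero circulations).**
For `n` sufficiently large: for any `s ≥ 1` with `n³s ≥ 7` and any nonzero vectors
`y_1, …, y_s ∈ ℤ^E` with `‖y_i‖₁ ≤ 4n²`, there is a weight function `w ∈ W(n³s)` with
`⟨y_i, w⟩ ≠ 0` for every `i`. -/
theorem exists_weight_nonzero_dot :
    ∃ N : ℕ, ∀ n : ℕ, N ≤ n → ∀ G : SimpleGraph (Fin n),
      ∀ idx : Sym2 (Fin n) → ℕ, IsEnum G idx →
      ∀ s : ℕ, 1 ≤ s → 7 ≤ n ^ 3 * s →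
      ∀ y : Fin s → (Sym2 (Fin n) → ℤ),
        (∀ i, y i ≠ 0 ∧ suppZ (y i) ⊆ G.edgeSet ∧ l1norm (y i) ≤ 4 * (n : ℤ) ^ 2) →
        ∃ w ∈ Wfam n idx (n ^ 3 * s), ∀ i, dotZ (y i) w ≠ 0 := by
  refine ⟨13, fun n hn G idx henum s hs _ y hy => ?_⟩
  set B : ℤ := 4 * (n : ℤ) ^ 2 + 1
  have hB : 0 < B := by positivity
  have hsupp (i e) (he : y i e ≠ 0) : e ∈ G.edgeSet := (hy i).2.1 he
  have hl1 (i) : ∑ e, |y i e| < B := (hy i).2.2.trans_lt (lt_add_one _)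
  have hidx (i e) (he : y i e ≠ 0) : idx e < n ^ 2 + 1 :=
    Nat.lt_succ_of_le (henum.apply_le_sq (hsupp i e he))
  have hY0 (i) : powSum B idx (y i) ≠ 0 :=
    powSum_ne_zero hB (hy i).1 (henum.injOn.mono fun e he => hsupp i e he) (hl1 i)
  have hYlt (i) : (powSum B idx (y i)).natAbs < (4 * n ^ 2 + 1) ^ (n ^ 2 + 1) := by
    have h : ((powSum B idx (y i)).natAbs : ℤ) < ((4 * n ^ 2 + 1) ^ (n ^ 2 + 1) : ℕ) := by
      rw [Int.natCast_natAbs]; push_cast; exact abs_powSum_lt hB (hidx i) (hl1 i)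
    exact_mod_cast h
  set P := ∏ i, (powSum B idx (y i)).natAbs
  have hP0 : P ≠ 0 := Finset.prod_ne_zero_iff.mpr fun i _ => Int.natAbs_ne_zero.mpr (hY0 i)
  have hP : P < ((4 * n ^ 2 + 1) ^ (n ^ 2 + 1)) ^ s := by
    simpa using Finset.prod_lt_prod_of_nonempty (fun i _ => Int.natAbs_pos.mpr (hY0 i))
      (fun i _ => hYlt i) (Finset.univ_nonempty_iff.mpr ⟨⟨0, hs⟩⟩)
  obtain ⟨k, hk2, hkt, hkP⟩ := exists_not_dvd_of_succ_mul_lt_two_pow hP0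
    (succ_mul_lt_two_pow (succ_cube_mul_pow_le_two_pow hn) hP)
  refine ⟨_, ⟨k, hk2, hkt, rfl⟩, fun i hi => hkP ?_⟩
  exact (Int.natCast_dvd.mp (dvd_powSum_of_sum_mul_emod_eq_zero hi)).trans
    (Finset.dvd_prod_of_mem _ (Finset.mem_univ i))

end PMQuasiNC
end
end

section
/- Let F be a face of the perfect matching polytope and let S ⊆ T be two sets with S, T ∈ tight(F). If T is F-contractible, then S is F-contractible. -/
/- Formalization framework for "The Matching Problem in General Graphs is in Quasi-NC"
(Svensson–Tarnawski).  The graph has vertex set `Fin n`; vectors indexed by edges are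
modelled as functions `Sym2 (Fin n) → ℝ` (resp. `ℤ`) supported on the edge set. -/

open scoped BigOperators
open scoped Classical

noncomputable section

namespace PMQuasiNC

/-! Let `e ∈ δ(S)` lie in two perfect matchings `M₁, M₂` of `F`. Since `S` is tight, `e` is the
only edge of either matching in `δ(S)`, so taking `M₁` inside `S` and `M₂` outside `S` gives a
perfect matching `M₃`; as `M₁ + M₂ = M₃ + M₄` for the complementary recombination `M₄`, the
matching `M₃` lies on the face `F`. Now `M₂` and `M₃` share their edge in `δ(T)`, so by
contractibility of `T` they agree on `E(T) ⊇ E(S)`, i.e. `M₁` and `M₂` agree on `E(S)`. -/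

section Matchings

variable {n : ℕ} {G : SimpleGraph (Fin n)}

lemma notMem_insideEdges_of_mem_cut {S : Finset (Fin n)} {e : Sym2 (Fin n)}
    (he : e ∈ cut G S) : e ∉ insideEdges G S := by
  obtain ⟨-, u, v, rfl, -, hv⟩ := he
  exact fun h => hv (h.2 v (Sym2.mem_mk_right u v))

lemma mem_insideEdges_or_mem_cut {S : Finset (Fin n)} {f : Sym2 (Fin n)} (hf : f ∈ G.edgeSet)
    {w : Fin n} (hw : w ∈ f) (hwS : w ∈ S) : f ∈ insideEdges G S ∨ f ∈ cut G S := by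
  refine or_iff_not_imp_left.mpr fun hfS => ?_
  obtain ⟨x, hx, hxS⟩ : ∃ x ∈ f, x ∉ S := by simpa [insideEdges, hf] using hfS
  have hwx : w ≠ x := by rintro rfl; exact hxS hwS
  exact ⟨hf, w, x, (Sym2.mem_and_mem_iff hwx).mp ⟨hw, hx⟩, hwS, hxS⟩

lemma insideEdges_mono {S T : Finset (Fin n)} (hST : S ⊆ T) :
    insideEdges G S ⊆ insideEdges G T :=
  fun _ hf => ⟨hf.1, fun v hv => hST (hf.2 v hv)⟩

lemma IsPerfectMatching.eq_of_mem {M : Set (Sym2 (Fin n))} (hM : IsPerfectMatching G M)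
    {v : Fin n} {f g : Sym2 (Fin n)} (hf : f ∈ M) (hvf : v ∈ f) (hg : g ∈ M) (hvg : v ∈ g) :
    f = g :=
  (hM.2 v).unique ⟨hf, hvf⟩ ⟨hg, hvg⟩

lemma IsPerfectMatching.ite_insideEdges {S : Finset (Fin n)} {e : Sym2 (Fin n)}
    {M₁ M₂ : Set (Sym2 (Fin n))} (h₁ : IsPerfectMatching G M₁) (h₂ : IsPerfectMatching G M₂)
    (he : e ∈ cut G S) (he₁ : e ∈ M₁) (he₂ : e ∈ M₂)
    (hu₁ : ∀ f ∈ M₁, f ∈ cut G S → f = e) (hu₂ : ∀ f ∈ M₂, f ∈ cut G S → f = e) :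
    IsPerfectMatching G ((insideEdges G S).ite M₁ M₂) := by
  refine ⟨(Set.ite_subset_union _ _ _).trans (Set.union_subset h₁.1 h₂.1), fun v => ?_⟩
  by_cases hve : v ∈ e
  · refine ⟨e, ⟨Or.inr ⟨he₂, notMem_insideEdges_of_mem_cut he⟩, hve⟩, ?_⟩
    rintro f ⟨hf | hf, hvf⟩
    exacts [h₁.eq_of_mem hf.1 hvf he₁ hve, h₂.eq_of_mem hf.1 hvf he₂ hve]
  by_cases hvS : v ∈ S
  · obtain ⟨g, ⟨hg, hvg⟩, -⟩ := h₁.2 v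
    have hgS : g ∈ insideEdges G S := (mem_insideEdges_or_mem_cut (h₁.1 hg) hvg hvS).resolve_right
      fun hgc => hve (hu₁ g hg hgc ▸ hvg)
    refine ⟨g, ⟨Or.inl ⟨hg, hgS⟩, hvg⟩, ?_⟩
    rintro f ⟨hf | ⟨hf, hfS⟩, hvf⟩
    · exact h₁.eq_of_mem hf.1 hvf hg hvg
    · have hfc := (mem_insideEdges_or_mem_cut (h₂.1 hf) hvf hvS).resolve_left hfS
      exact absurd (hu₂ f hf hfc ▸ hvf) hve
  · obtain ⟨g, ⟨hg, hvg⟩, -⟩ := h₂.2 v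
    refine ⟨g, ⟨Or.inr ⟨hg, fun hgS => hvS (hgS.2 v hvg)⟩, hvg⟩, ?_⟩
    rintro f ⟨hf | hf, hvf⟩
    · exact absurd (hf.2.2 v hvf) hvS
    · exact h₂.eq_of_mem hf.1 hvf hg hvg

end Matchings

section Faces

variable {n : ℕ}

lemma dotR_add (w x y : Sym2 (Fin n) → ℝ) : dotR w (x + y) = dotR w x + dotR w y := by
  simp only [dotR, Pi.add_apply, mul_add, Finset.sum_add_distrib]

lemma mem_faceMinR_of_add_eq {P : Set (Sym2 (Fin n) → ℝ)} {w x₁ x₂ y₁ y₂ : Sym2 (Fin n) → ℝ}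
    (hx₁ : x₁ ∈ faceMinR P w) (hx₂ : x₂ ∈ faceMinR P w) (hy₁ : y₁ ∈ P) (hy₂ : y₂ ∈ P)
    (h : x₁ + x₂ = y₁ + y₂) : y₁ ∈ faceMinR P w := by
  have hsum := congrArg (dotR w) h
  rw [dotR_add, dotR_add] at hsum
  have hx₁x₂ := hx₁.2 x₂ hx₂.1
  have hx₂x₁ := hx₂.2 x₁ hx₁.1
  have hx₁y₂ := hx₁.2 y₂ hy₂
  refine ⟨hy₁, fun y hy => ?_⟩
  linarith [hx₁.2 y hy]

lemma indic_mem_PMpoly {G : SimpleGraph (Fin n)} {M : Set (Sym2 (Fin n))}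
    (hM : IsPerfectMatching G M) : indic M ∈ PMpoly G :=
  subset_convexHull ℝ _ ⟨M, hM, rfl⟩

lemma indic_ite_add_indic_ite (I A B : Set (Sym2 (Fin n))) :
    indic (I.ite A B) + indic (I.ite B A) = indic A + indic B := by
  funext f
  by_cases hI : f ∈ I <;> by_cases hA : f ∈ A <;> by_cases hB : f ∈ B <;>
    simp [indic, Set.ite, hI, hA, hB]

lemma IsFace.indic_ite_mem {G : SimpleGraph (Fin n)} {F : Set (Sym2 (Fin n) → ℝ)}
    (hF : IsFace G F) {I M₁ M₂ : Set (Sym2 (Fin n))} (h₁ : indic M₁ ∈ F) (h₂ : indic M₂ ∈ F)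
    (h₁₂ : IsPerfectMatching G (I.ite M₁ M₂)) (h₂₁ : IsPerfectMatching G (I.ite M₂ M₁)) :
    indic (I.ite M₁ M₂) ∈ F := by
  obtain ⟨-, w, rfl⟩ := hF
  exact mem_faceMinR_of_add_eq h₁ h₂ (indic_mem_PMpoly h₁₂) (indic_mem_PMpoly h₂₁)
    (indic_ite_add_indic_ite I M₁ M₂).symm

end Faces

section Tight

variable {n : ℕ} {G : SimpleGraph (Fin n)} {F : Set (Sym2 (Fin n) → ℝ)}

lemma dotR_cutInd_indic (S : Finset (Fin n)) (M : Set (Sym2 (Fin n))) :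
    dotR (cutInd G S) (indic M) = (Finset.univ.filter (fun e => e ∈ M ∧ e ∈ cut G S)).card := by
  rw [dotR, Finset.card_filter, Nat.cast_sum]
  refine Finset.sum_congr rfl fun e _ => ?_
  by_cases hc : e ∈ cut G S <;> by_cases hm : e ∈ M <;> simp [cutInd, indic, hc, hm]

lemma existsUnique_mem_cut_of_mem_tightSets {S : Finset (Fin n)} (hS : S ∈ tightSets G F)
    {M : Set (Sym2 (Fin n))} (hMF : indic M ∈ F) : ∃! e, e ∈ M ∧ e ∈ cut G S := by
  have hcard := hS.2 _ hMF
  rw [dotR_cutInd_indic, Nat.cast_eq_one, Finset.card_eq_one] at hcard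
  obtain ⟨a, ha⟩ := hcard
  refine ⟨a, ?_, fun f hf => ?_⟩
  · simpa using ha.ge (Finset.mem_singleton_self a)
  · simpa using ha.le (Finset.mem_filter.mpr ⟨Finset.mem_univ f, hf⟩)

lemma ite_insideEdges_mem_face (hF : IsFace G F) {S : Finset (Fin n)} (hS : S ∈ tightSets G F)
    {e : Sym2 (Fin n)} (he : e ∈ cut G S) {M₁ M₂ : Set (Sym2 (Fin n))}
    (h₁ : IsPerfectMatching G M₁) (h₂ : IsPerfectMatching G M₂)
    (hF₁ : indic M₁ ∈ F) (hF₂ : indic M₂ ∈ F) (he₁ : e ∈ M₁) (he₂ : e ∈ M₂) :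
    IsPerfectMatching G ((insideEdges G S).ite M₁ M₂) ∧
      indic ((insideEdges G S).ite M₁ M₂) ∈ F := by
  have hu₁ : ∀ f ∈ M₁, f ∈ cut G S → f = e := fun f hf hfc =>
    (existsUnique_mem_cut_of_mem_tightSets hS hF₁).unique ⟨hf, hfc⟩ ⟨he₁, he⟩
  have hu₂ : ∀ f ∈ M₂, f ∈ cut G S → f = e := fun f hf hfc =>
    (existsUnique_mem_cut_of_mem_tightSets hS hF₂).unique ⟨hf, hfc⟩ ⟨he₂, he⟩
  have h₁₂ := h₁.ite_insideEdges h₂ he he₁ he₂ hu₁ hu₂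
  exact ⟨h₁₂, hF.indic_ite_mem hF₁ hF₂ h₁₂ (h₂.ite_insideEdges h₁ he he₂ he₁ hu₂ hu₁)⟩

end Tight

/-- **Lemma (contractibility is downward closed).**
Let `F` be a face of the perfect matching polytope and `S ⊆ T` with
`S, T ∈ tight(F)`.  If `T` is `F`-contractible, then so is `S`. -/
theorem contractible_downward_closed (n : ℕ) (G : SimpleGraph (Fin n))
    (F : Set (Sym2 (Fin n) → ℝ)) (hF : IsFace G F)
    (S T : Finset (Fin n)) (hST : S ⊆ T)
    (hS : S ∈ tightSets G F) (hT : T ∈ tightSets G F)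
    (hc : Contractible G F T) :
    Contractible G F S := by
  intro e he M₁ M₂ h₁ h₂ hF₁ hF₂ he₁ he₂
  set I := insideEdges G S
  obtain ⟨h₃, hF₃⟩ := ite_insideEdges_mem_face hF hS he h₁ h₂ hF₁ hF₂ he₁ he₂
  obtain ⟨c, ⟨hc₂, hcT⟩, -⟩ := existsUnique_mem_cut_of_mem_tightSets hT hF₂
  have hcI : c ∉ I := fun hcS => notMem_insideEdges_of_mem_cut hcT (insideEdges_mono hST hcS)
  have hagree : M₂ ∩ insideEdges G T = I.ite M₁ M₂ ∩ insideEdges G T :=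
    hc c hcT M₂ _ h₂ h₃ hF₂ hF₃ hc₂ (Or.inr ⟨hc₂, hcI⟩)
  have hIT : insideEdges G T ∩ I = I := Set.inter_eq_right.mpr (insideEdges_mono hST)
  calc M₁ ∩ I = I.ite M₁ M₂ ∩ I := (Set.ite_inter_self I M₁ M₂).symm
    _ = I.ite M₁ M₂ ∩ insideEdges G T ∩ I := by rw [Set.inter_assoc, hIT]
    _ = M₂ ∩ I := by rw [← hagree, Set.inter_assoc, hIT]
end PMQuasiNC
end
end

section
/- Let F be a face of the perfect matching polytope with E = supp(F), and let S, T ∈ tight(F) be crossing sets. If |S∩T| is odd, then S∩T ∈ tight(F), S∪T ∈ tight(F), and 1_{δ(S)} + 1_{δ(T)} = 1_{δ(S∩T)} + 1_{δ(S∪T)}; otherwise (|S∩T| even), S\T ∈ tight(F), T\S ∈ tight(F), and 1_{δ(S)} + 1_{δ(T)} = 1_{δ(S\T)} + 1_{δ(T\S)}. -/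
/- Formalization framework for "The Matching Problem in General Graphs is in Quasi-NC"
(Svensson–Tarnawski).  The graph has vertex set `Fin n`; vectors indexed by edges are
modelled as functions `Sym2 (Fin n) → ℝ` (resp. `ℤ`) supported on the edge set. -/

open scoped BigOperators
open scoped Classical

noncomputable section

namespace PMQuasiNC

/-! Every `x ∈ PM` is nonnegative and has `x(δ(U)) ≥ 1` for odd `U`, since a perfect
matching without an edge leaving `U` would pair up the vertices of `U`. Counting each edge by
its endpoints in `S` and `T` gives `1_{δ(S)} + 1_{δ(T)} = 1_{δ(P)} + 1_{δ(Q)} + 2·1_{E(A,B)}`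
with `(P, Q, A, B) = (S∩T, S∪T, S\T, T\S)` or `(S\T, T\S, S∩T, V\(S∪T))`, and the parity of
`|S∩T|` decides which pair `P`, `Q` is odd. For `x ∈ F` the left side is `2`, the right side at
least `2 + 2·x(E(A,B))`. Hence `P`, `Q` are tight and `x(E(A,B)) = 0` on `F`, so `E(A,B)` misses
`supp(F) = E` and is empty. -/

theorem _root_.Finset.even_card_of_involution {α : Type*} {s : Finset α} (g : α → α)
    (hg_mem : ∀ a ∈ s, g a ∈ s) (hg_ne : ∀ a ∈ s, g a ≠ a)
    (hg_invol : ∀ a ∈ s, g (g a) = a) : Even s.card := by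
  have h : ∑ _a ∈ s, (1 : ZMod 2) = 0 :=
    Finset.sum_involution (fun a _ => g a) (fun _ _ => by decide)
      (fun a ha _ => hg_ne a ha) hg_mem hg_invol
  rwa [Finset.sum_const, nsmul_one, ZMod.natCast_eq_zero_iff_even] at h

theorem _root_.Finset.odd_card_union_of_odd_card_inter {α : Type*} [DecidableEq α]
    {S T : Finset α} (hS : Odd S.card) (hT : Odd T.card) (hST : Odd (S ∩ T).card) :
    Odd (S ∪ T).card := by
  have := Finset.card_union_add_card_inter S T
  rw [Nat.odd_iff] at *
  omega

theorem _root_.Finset.odd_card_sdiff_of_even_card_inter {α : Type*} [DecidableEq α]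
    {S T : Finset α} (hS : Odd S.card) (hST : ¬ Odd (S ∩ T).card) : Odd (S \ T).card := by
  have := Finset.card_sdiff_add_card_inter S T
  rw [Nat.odd_iff] at *
  omega

variable {n : ℕ} {G : SimpleGraph (Fin n)}

theorem IsPerfectMatching.exists_mate {M : Set (Sym2 (Fin n))} (hM : IsPerfectMatching G M) :
    ∃ mate : Fin n → Fin n,
      ∀ v, G.Adj v (mate v) ∧ s(v, mate v) ∈ M ∧ mate (mate v) = v := by
  have hex : ∀ v, ∃ u, s(v, u) ∈ M := fun v => by
    obtain ⟨e, ⟨heM, hve⟩, -⟩ := hM.2 v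
    exact ⟨Sym2.Mem.other hve, (Sym2.other_spec hve).symm ▸ heM⟩
  choose mate hmate using hex
  refine ⟨mate, fun v => ⟨hM.1 (hmate v), hmate v, ?_⟩⟩
  have hsame := (hM.2 (mate v)).unique ⟨hmate (mate v), Sym2.mem_mk_left _ _⟩
    ⟨Sym2.eq_swap ▸ hmate v, Sym2.mem_mk_left _ _⟩
  exact Sym2.congr_right.mp hsame

theorem IsPerfectMatching.exists_mem_cut {M : Set (Sym2 (Fin n))} (hM : IsPerfectMatching G M)
    {U : Finset (Fin n)} (hU : Odd U.card) : ∃ e ∈ M, e ∈ cut G U := by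
  obtain ⟨mate, hmate⟩ := hM.exists_mate
  by_contra! hnone
  have hmem : ∀ v ∈ U, mate v ∈ U := fun v hv => by
    by_contra hout
    exact hnone _ (hmate v).2.1 ⟨(hmate v).1, v, mate v, rfl, hv, hout⟩
  exact Nat.not_even_iff_odd.mpr hU <| Finset.even_card_of_involution mate hmem
    (fun v _ => (hmate v).1.ne.symm) (fun v _ => (hmate v).2.2)

theorem indic_nonneg (M : Set (Sym2 (Fin n))) (e : Sym2 (Fin n)) : 0 ≤ indic M e := by
  unfold indic
  split_ifs <;> norm_num

theorem cutInd_eq_indic (U : Finset (Fin n)) : cutInd G U = indic (cut G U) := rfl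

theorem dotR_eq_dotProduct (w x : Sym2 (Fin n) → ℝ) : dotR w x = w ⬝ᵥ x := rfl

theorem dotR_nonneg {w x : Sym2 (Fin n) → ℝ} (hw : ∀ e, 0 ≤ w e) (hx : ∀ e, 0 ≤ x e) :
    0 ≤ dotR w x :=
  Finset.sum_nonneg fun e _ => mul_nonneg (hw e) (hx e)

theorem le_of_mem_PMpoly {f : (Sym2 (Fin n) → ℝ) → ℝ} (hf : IsLinearMap ℝ f) {r : ℝ}
    (hr : ∀ M, IsPerfectMatching G M → r ≤ f (indic M)) {x : Sym2 (Fin n) → ℝ}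
    (hx : x ∈ PMpoly G) : r ≤ f x :=
  convexHull_min (by rintro _ ⟨M, hM, rfl⟩; exact hr M hM) (convex_halfSpace_ge hf r) hx

theorem nonneg_of_mem_PMpoly {x : Sym2 (Fin n) → ℝ} (hx : x ∈ PMpoly G) (e : Sym2 (Fin n)) :
    0 ≤ x e :=
  le_of_mem_PMpoly (LinearMap.proj (R := ℝ) e).isLinear (fun M _ => indic_nonneg M e) hx

theorem one_le_dotR_cutInd_of_mem_PMpoly {x : Sym2 (Fin n) → ℝ} (hx : x ∈ PMpoly G)
    {U : Finset (Fin n)} (hU : Odd U.card) : 1 ≤ dotR (cutInd G U) x := by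
  refine le_of_mem_PMpoly ⟨dotProduct_add _, fun c y => dotProduct_smul c _ y⟩
    (fun M hM => ?_) hx
  obtain ⟨e, heM, hecut⟩ := hM.exists_mem_cut hU
  calc (1 : ℝ) = cutInd G U e * indic M e := by simp [cutInd, indic, heM, hecut]
    _ ≤ dotR (cutInd G U) (indic M) :=
      Finset.single_le_sum (f := fun e => cutInd G U e * indic M e)
        (fun e _ => mul_nonneg (indic_nonneg _ e) (indic_nonneg _ e)) (Finset.mem_univ e)

def edgesBetween (G : SimpleGraph (Fin n)) (A B : Finset (Fin n)) : Set (Sym2 (Fin n)) :=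
  {e | e ∈ G.edgeSet ∧ ∃ u v, e = s(u, v) ∧ u ∈ A ∧ v ∈ B}

theorem mem_edgesBetween_mk {A B : Finset (Fin n)} {a b : Fin n} :
    s(a, b) ∈ edgesBetween G A B ↔ G.Adj a b ∧ (a ∈ A ∧ b ∈ B ∨ b ∈ A ∧ a ∈ B) := by
  simp only [edgesBetween, Set.mem_ofPred_eq, SimpleGraph.mem_edgeSet, Sym2.eq_iff]
  grind

theorem cut_eq_edgesBetween (U : Finset (Fin n)) : cut G U = edgesBetween G U Uᶜ := by
  ext e
  simp [cut, edgesBetween]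

theorem cutInd_add_cutInd_eq_inter_union (S T : Finset (Fin n)) :
    cutInd G S + cutInd G T = cutInd G (S ∩ T) + cutInd G (S ∪ T)
      + (2 : ℝ) • indic (edgesBetween G (S \ T) (T \ S)) := by
  funext e
  induction e using Sym2.ind with
  | _ a b =>
    simp only [Pi.add_apply, Pi.smul_apply, smul_eq_mul, cutInd_eq_indic, indic,
      cut_eq_edgesBetween, mem_edgesBetween_mk, Finset.mem_inter, Finset.mem_union,
      Finset.mem_sdiff, Finset.mem_compl]
    by_cases G.Adj a b <;> by_cases a ∈ S <;> by_cases a ∈ T <;> by_cases b ∈ S <;>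
      by_cases b ∈ T <;> simp_all <;> norm_num

theorem cutInd_add_cutInd_eq_sdiff_sdiff (S T : Finset (Fin n)) :
    cutInd G S + cutInd G T = cutInd G (S \ T) + cutInd G (T \ S)
      + (2 : ℝ) • indic (edgesBetween G (S ∩ T) (S ∪ T)ᶜ) := by
  funext e
  induction e using Sym2.ind with
  | _ a b =>
    simp only [Pi.add_apply, Pi.smul_apply, smul_eq_mul, cutInd_eq_indic, indic,
      cut_eq_edgesBetween, mem_edgesBetween_mk, Finset.mem_inter, Finset.mem_union,
      Finset.mem_sdiff, Finset.mem_compl]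
    by_cases G.Adj a b <;> by_cases a ∈ S <;> by_cases a ∈ T <;> by_cases b ∈ S <;>
      by_cases b ∈ T <;> simp_all <;> norm_num

variable {F : Set (Sym2 (Fin n) → ℝ)}

theorem eq_empty_of_dotR_indic_eq_zero (hF : F ⊆ PMpoly G) {D : Set (Sym2 (Fin n))}
    (hD : D ⊆ faceSupp F) (hzero : ∀ x ∈ F, dotR (indic D) x = 0) : D = ∅ := by
  refine Set.eq_empty_of_forall_notMem fun e he => ?_
  obtain ⟨x, hxF, hxe⟩ := hD he
  have hterm : indic D e * x e = 0 :=
    (Finset.sum_eq_zero_iff_of_nonneg fun e _ =>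
      mul_nonneg (indic_nonneg D e) (nonneg_of_mem_PMpoly (hF hxF) e)).mp
      (hzero x hxF) e (Finset.mem_univ e)
  simp only [indic, if_pos he, one_mul] at hterm
  exact hxe.ne' hterm

theorem tight_of_cutInd_add_cutInd_eq (hF : F ⊆ PMpoly G) (hsupp : G.edgeSet ⊆ faceSupp F)
    {S T P Q A B : Finset (Fin n)} (hS : S ∈ tightSets G F) (hT : T ∈ tightSets G F)
    (hP : Odd P.card) (hQ : Odd Q.card)
    (hid : cutInd G S + cutInd G T
      = cutInd G P + cutInd G Q + (2 : ℝ) • indic (edgesBetween G A B)) :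
    P ∈ tightSets G F ∧ Q ∈ tightSets G F ∧
      cutInd G S + cutInd G T = cutInd G P + cutInd G Q := by
  have hvalues : ∀ x ∈ F, dotR (cutInd G P) x = 1 ∧ dotR (cutInd G Q) x = 1 ∧
      dotR (indic (edgesBetween G A B)) x = 0 := by
    intro x hx
    have hsum := congrArg (dotR · x) hid
    simp only [dotR_eq_dotProduct, add_dotProduct, smul_dotProduct, smul_eq_mul] at hsum
    simp only [← dotR_eq_dotProduct, hS.2 x hx, hT.2 x hx] at hsum
    have hP1 := one_le_dotR_cutInd_of_mem_PMpoly (hF hx) hP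
    have hQ1 := one_le_dotR_cutInd_of_mem_PMpoly (hF hx) hQ
    have hAB := dotR_nonneg (indic_nonneg (edgesBetween G A B)) (nonneg_of_mem_PMpoly (hF hx))
    exact ⟨by linarith, by linarith, by linarith⟩
  have hempty : edgesBetween G A B = ∅ :=
    eq_empty_of_dotR_indic_eq_zero hF (fun e he => hsupp he.1) fun x hx =>
      (hvalues x hx).2.2
  refine ⟨⟨hP, fun x hx => (hvalues x hx).1⟩, ⟨hQ, fun x hx => (hvalues x hx).2.1⟩, ?_⟩
  rw [hid, hempty]
  funext e
  simp [indic]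

theorem uncrossing_general (n : ℕ) (G : SimpleGraph (Fin n))
    (F : Set (Sym2 (Fin n) → ℝ)) (hF : IsFace G F)
    (hsupp : G.edgeSet = faceSupp F)
    (S T : Finset (Fin n)) (hS : S ∈ tightSets G F) (hT : T ∈ tightSets G F) :
    (Odd (S ∩ T).card →
      S ∩ T ∈ tightSets G F ∧ S ∪ T ∈ tightSets G F ∧
        cutInd G S + cutInd G T = cutInd G (S ∩ T) + cutInd G (S ∪ T)) ∧
    (¬ Odd (S ∩ T).card →
      S \ T ∈ tightSets G F ∧ T \ S ∈ tightSets G F ∧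
        cutInd G S + cutInd G T = cutInd G (S \ T) + cutInd G (T \ S)) := by
  obtain ⟨-, w, rfl⟩ := hF
  have hPM : faceMinR (PMpoly G) w ⊆ PMpoly G := fun x hx => hx.1
  refine ⟨fun hodd => ?_, fun heven => ?_⟩
  · exact tight_of_cutInd_add_cutInd_eq hPM hsupp.le hS hT hodd
      (Finset.odd_card_union_of_odd_card_inter hS.1 hT.1 hodd)
      (cutInd_add_cutInd_eq_inter_union S T)
  · exact tight_of_cutInd_add_cutInd_eq hPM hsupp.le hS hT
      (Finset.odd_card_sdiff_of_even_card_inter hS.1 heven)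
      (Finset.odd_card_sdiff_of_even_card_inter hT.1 (Finset.inter_comm S T ▸ heven))
      (cutInd_add_cutInd_eq_sdiff_sdiff S T)

/-- **Lemma (uncrossing).**
Let `F` be a face of the perfect matching polytope with `E = supp(F)`, and let
`S, T ∈ tight(F)` be crossing sets.  If `|S ∩ T|` is odd, then
`S ∩ T, S ∪ T ∈ tight(F)` and `1_{δ(S)} + 1_{δ(T)} = 1_{δ(S∩T)} + 1_{δ(S∪T)}`;
otherwise `S \ T, T \ S ∈ tight(F)` and
`1_{δ(S)} + 1_{δ(T)} = 1_{δ(S\T)} + 1_{δ(T\S)}`. -/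
theorem uncrossing (n : ℕ) (G : SimpleGraph (Fin n))
    (F : Set (Sym2 (Fin n) → ℝ)) (hF : IsFace G F)
    (hsupp : G.edgeSet = faceSupp F)
    (S T : Finset (Fin n)) (hS : S ∈ tightSets G F) (hT : T ∈ tightSets G F)
    (hcross : Crossing S T) :
    (Odd (S ∩ T).card →
      S ∩ T ∈ tightSets G F ∧ S ∪ T ∈ tightSets G F ∧
        cutInd G S + cutInd G T = cutInd G (S ∩ T) + cutInd G (S ∪ T)) ∧
    (¬ Odd (S ∩ T).card →
      S \ T ∈ tightSets G F ∧ T \ S ∈ tightSets G F ∧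
        cutInd G S + cutInd G T = cutInd G (S \ T) + cutInd G (T \ S)) :=
  uncrossing_general n G F hF hsupp S T hS hT
end PMQuasiNC
end
end
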